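/- arXiv:2102.11351 — 4 statements merged into one kernel-verified Lean document; each statement's English description precedes it below -/
import Mathlib

section
/- Let d ≥ 1 and let μ be a probability measure on ℝ^d (i.e., on Fin d → ℝ) with joint CDF F(x) = μ{y | ∀ i, y_i ≤ x_i} and marginal CDFs F_i(t) = μ{y | y_i ≤ t}. Assume each F_i is continuous. Let ν be the pushforward of μ under the map y ↦ (F_1(y_1), …, F_d(y_d)). Then (a) for each coordinate i, the i-th marginal of ν is the uniform distribution on [0,1] (i.e., ν{u | u_i ≤ t} = t for all t ∈ [0,1]), and (b) for every x ∈ ℝ^d, F(x) = ν{u | ∀ i, u_i ≤ F_i(x_i)}. (Existence part of Sklar's theorem for continuous margins.) -/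
/-!
For a probability measure `P` on `ℝ` with continuous CDF `G`, the sublevel set `{G ≤ t}`
(`0 ≤ t ≤ 1`) is a closed half-line `Iic c` with `G c = t`, so `P {G ≤ t} = t`: the margins of
the transformed measure are uniform. Taking `t = G x` shows that `{G ≤ G x}` and `Iic x` have the
same measure; as the first contains the second, they agree `P`-a.e. Pulling back along the
coordinate projections and intersecting, `{y | ∀ i, Gᵢ (y i) ≤ Gᵢ (x i)}` agrees `μ`-a.e. with
`{y | ∀ i, y i ≤ x i}`, which is the identity `F x = ν {u | ∀ i, u i ≤ Gᵢ (x i)}`.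
-/

open MeasureTheory Set Filter ProbabilityTheory

theorem Monotone.exists_preimage_Iic_eq_Iic {α β : Type*} [ConditionallyCompleteLinearOrder α]
    [TopologicalSpace α] [OrderTopology α] [DenselyOrdered α] [NoMaxOrder α] [LinearOrder β]
    [TopologicalSpace β] [OrderClosedTopology β] {f : α → β} (hmono : Monotone f)
    (hf : Continuous f) {t : β} (hne : (f ⁻¹' Iic t).Nonempty) (hbdd : BddAbove (f ⁻¹' Iic t)) :
    ∃ c, f ⁻¹' Iic t = Iic c ∧ f c = t := by
  set c := sSup (f ⁻¹' Iic t)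
  have hc : f c ≤ t := (isClosed_Iic.preimage hf).csSup_mem hne hbdd
  have hS : f ⁻¹' Iic t = Iic c :=
    Subset.antisymm (fun s hs => le_csSup hbdd hs) fun s hs => (hmono hs).trans hc
  have hIoi : Ioi c ⊆ f ⁻¹' Ici t := fun s hs => show t ≤ f s from
    le_of_lt <| not_le.1 fun h => not_le.2 (mem_Ioi.1 hs) (hS.subset h)
  have hcl := (isClosed_Ici.preimage hf).closure_subset_iff.2 hIoi
  rw [closure_Ioi] at hcl
  exact ⟨c, hS, le_antisymm hc (hcl self_mem_Ici)⟩

section CDF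

variable (P : Measure ℝ) [IsProbabilityMeasure P]

theorem measureReal_cdf_le (hc : Continuous (cdf P)) {t : ℝ} (ht : t ∈ Icc 0 1) :
    P.real {s | cdf P s ≤ t} = t := by
  rcases ht.2.eq_or_lt with rfl | ht1
  · simp [cdf_le_one]
  obtain ⟨b, hb⟩ := eventually_atTop.1 <| (tendsto_cdf_atTop P).eventually (lt_mem_nhds ht1)
  have hbdd : BddAbove (cdf P ⁻¹' Iic t) :=
    ⟨b, fun s hs => le_of_not_gt fun hbs => (hb s hbs.le).not_ge hs⟩
  rcases (cdf P ⁻¹' Iic t).eq_empty_or_nonempty with hemp | hne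
  · have ht0 : t ≤ 0 := ge_of_tendsto (tendsto_cdf_atBot P) <| Eventually.of_forall fun s =>
      le_of_lt <| not_le.1 fun h => (hemp.subset h : s ∈ (∅ : Set ℝ))
    rw [show {s | cdf P s ≤ t} = ∅ from hemp, measureReal_empty, le_antisymm ht0 ht.1]
  obtain ⟨c, hS, hct⟩ := (monotone_cdf P).exists_preimage_Iic_eq_Iic hc hne hbdd
  change P.real (cdf P ⁻¹' Iic t) = t
  rw [hS, ← cdf_eq_real, hct]

theorem cdf_le_cdf_ae_eq_Iic (hc : Continuous (cdf P)) (x : ℝ) :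
    {s | cdf P s ≤ cdf P x} =ᵐ[P] Iic x := by
  have hmeas : P {s | cdf P s ≤ cdf P x} = P (Iic x) := by
    rw [← measureReal_eq_measureReal_iff, measureReal_cdf_le P hc ⟨cdf_nonneg P x, cdf_le_one P x⟩,
      cdf_eq_real]
  exact (ae_eq_of_subset_of_measure_ge (fun s hs => monotone_cdf P hs) hmeas.le
    measurableSet_Iic.nullMeasurableSet (measure_ne_top _ _)).symm

end CDF

section ProbIntegralTransform

variable {ι : Type*} (μ : Measure (ι → ℝ))

noncomputable def probIntegralTransform (y : ι → ℝ) : ι → ℝ :=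
  fun i => cdf (μ.map fun y => y i) (y i)

theorem measurable_probIntegralTransform : Measurable (probIntegralTransform μ) :=
  measurable_pi_lambda _ fun i => (monotone_cdf _).measurable.comp (measurable_pi_apply i)

variable [IsProbabilityMeasure μ]

theorem cdf_map_eval (i : ι) (t : ℝ) : cdf (μ.map fun y => y i) t = μ.real {y | y i ≤ t} := by
  have := Measure.isProbabilityMeasure_map (μ := μ) (measurable_pi_apply i).aemeasurable
  rw [cdf_eq_real, map_measureReal_apply (measurable_pi_apply i) measurableSet_Iic]
  rfl

theorem measureReal_map_probIntegralTransform_le {i : ι}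
    (hc : Continuous (cdf (μ.map fun y => y i))) {t : ℝ} (ht : t ∈ Icc 0 1) :
    (μ.map (probIntegralTransform μ)).real {u | u i ≤ t} = t := by
  have := Measure.isProbabilityMeasure_map (μ := μ) (measurable_pi_apply i).aemeasurable
  calc _ = (μ.map fun y => y i).real {s | cdf (μ.map fun y => y i) s ≤ t} := by
        rw [map_measureReal_apply (measurable_probIntegralTransform μ)
            (measurableSet_le (measurable_pi_apply i) measurable_const),
          map_measureReal_apply (measurable_pi_apply i)
            (measurableSet_le (monotone_cdf _).measurable measurable_const)]
        rfl
    _ = t := measureReal_cdf_le _ hc ht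

theorem map_probIntegralTransform_apply_Iic [Finite ι]
    (hc : ∀ i, Continuous (cdf (μ.map fun y => y i))) (x : ι → ℝ) :
    μ.map (probIntegralTransform μ) (Iic (probIntegralTransform μ x)) = μ (Iic x) := by
  rw [Measure.map_apply (measurable_probIntegralTransform μ) measurableSet_Iic]
  refine measure_congr ?_
  have hpre : ∀ c : ι → ℝ, Iic c = ⋂ i, (fun y : ι → ℝ => y i) ⁻¹' Iic (c i) := fun c => by
    ext; simp [Pi.le_def]
  rw [hpre, hpre, preimage_iInter]
  refine EventuallyEq.iInter fun i => ?_
  have := Measure.isProbabilityMeasure_map (μ := μ) (measurable_pi_apply i).aemeasurable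
  exact ((measurable_pi_apply i).quasiMeasurePreserving μ).preimage_ae_eq
    (cdf_le_cdf_ae_eq_Iic _ (hc i) (x i))

end ProbIntegralTransform

theorem sklar_existence_general
    (d : ℕ)
    (μ : Measure (Fin d → ℝ)) [IsProbabilityMeasure μ]
    (F : (Fin d → ℝ) → ℝ)
    (hF : ∀ x, F x = (μ {y | ∀ i, y i ≤ x i}).toReal)
    (Fi : Fin d → ℝ → ℝ)
    (hFi : ∀ i t, Fi i t = (μ {y | y i ≤ t}).toReal)
    (hcont : ∀ i, Continuous (Fi i))
    (ν : Measure (Fin d → ℝ))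
    (hν : ν = μ.map (fun y i => Fi i (y i))) :
    (∀ i : Fin d, ∀ t ∈ Icc (0 : ℝ) 1, (ν {u | u i ≤ t}).toReal = t) ∧
    (∀ x : Fin d → ℝ, F x = (ν {u | ∀ i, u i ≤ Fi i (x i)}).toReal) := by
  obtain rfl : Fi = fun i t => cdf (μ.map fun y => y i) t :=
    funext₂ fun i t => by rw [hFi, cdf_map_eval, measureReal_def]
  subst hν
  refine ⟨fun i t ht => measureReal_map_probIntegralTransform_le μ (hcont i) ht, fun x => ?_⟩
  rw [hF]
  exact congrArg ENNReal.toReal (map_probIntegralTransform_apply_Iic μ hcont x).symm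

/-- Existence part of Sklar's theorem for continuous margins: pushing a probability
measure on `ℝ^d` forward through its (continuous) marginal CDFs yields a copula `ν`
(uniform margins on `[0,1]`) such that `F(x) = ν {u | ∀ i, u i ≤ Fᵢ (x i)}`. -/
theorem sklar_existence
    (d : ℕ) (hd : 1 ≤ d)
    (μ : Measure (Fin d → ℝ)) [IsProbabilityMeasure μ]
    (F : (Fin d → ℝ) → ℝ)
    (hF : ∀ x, F x = (μ {y | ∀ i, y i ≤ x i}).toReal)
    (Fi : Fin d → ℝ → ℝ)
    (hFi : ∀ i t, Fi i t = (μ {y | y i ≤ t}).toReal)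
    (hcont : ∀ i, Continuous (Fi i))
    (ν : Measure (Fin d → ℝ))
    (hν : ν = μ.map (fun y i => Fi i (y i))) :
    (∀ i : Fin d, ∀ t ∈ Icc (0 : ℝ) 1, (ν {u | u i ≤ t}).toReal = t) ∧
    (∀ x : Fin d → ℝ, F x = (ν {u | ∀ i, u i ≤ Fi i (x i)}).toReal) :=
  sklar_existence_general d μ F hF Fi hFi hcont ν hν
end

section
/- Let μ be a probability measure on ℝ^d with joint CDF F and continuous marginal CDFs F_1, …, F_d. Suppose ν and ν′ are two probability measures on [0,1]^d, each of whose coordinate margins is uniform on [0,1], with CDFs C(u) = ν{v | ∀ i, v_i ≤ u_i} and C′(u) = ν′{v | ∀ i, v_i ≤ u_i}, such that F(x) = C(F_1(x_1), …, F_d(x_d)) = C′(F_1(x_1), …, F_d(x_d)) for all x ∈ ℝ^d. Then C(u) = C′(u) for all u ∈ [0,1]^d. (Uniqueness part of Sklar's theorem for continuous margins.) -/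
/-!
A copula is Lipschitz on `[0,1]^d`: moving one coordinate of the corner of a box changes the box's
mass by at most the mass of a slab, which the uniform margin makes equal to the slab's width. A
continuous margin takes every value in `(0,1)`, so the coupling identity forces `C = C'` on the
open cube `(0,1)^d`, and by continuity on its closure `[0,1]^d`.
-/

open MeasureTheory ProbabilityTheory Set

section BoxMeasure

variable {ι : Type*} [Fintype ι] {ν : Measure (ι → ℝ)} [IsFiniteMeasure ν]

lemma measureReal_Iic_sub_le_sum {u w : ι → ℝ} (huw : u ≤ w) :
    ν.real (Iic w) - ν.real (Iic u) ≤
      ∑ i, (ν.real {v | v i ≤ w i} - ν.real {v | v i ≤ u i}) := by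
  have hcover : Iic w ⊆ Iic u ∪ ⋃ i, {v | v i ≤ w i} \ {v | v i ≤ u i} := by
    intro v hv
    by_cases h : ∀ i, v i ≤ u i
    · exact Or.inl h
    · obtain ⟨i, hi⟩ := not_forall.1 h
      exact Or.inr (mem_iUnion.2 ⟨i, hv i, hi⟩)
  have hdiff : ∀ i, ν.real ({v | v i ≤ w i} \ {v | v i ≤ u i}) =
      ν.real {v | v i ≤ w i} - ν.real {v | v i ≤ u i} := fun i =>
    measureReal_sdiff (fun v hv => hv.trans (huw i))
      (measurableSet_le (measurable_pi_apply i) measurable_const)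
  calc ν.real (Iic w) - ν.real (Iic u)
      ≤ ν.real (⋃ i, {v | v i ≤ w i} \ {v | v i ≤ u i}) := by
        linarith [measureReal_mono (μ := ν) hcover, measureReal_union_le (μ := ν) (Iic u)
          (⋃ i, {v | v i ≤ w i} \ {v | v i ≤ u i})]
    _ ≤ _ := (measureReal_iUnion_fintype_le _).trans_eq (by simp only [hdiff])

lemma abs_measureReal_Iic_sub_le_sum (u w : ι → ℝ) :
    |ν.real (Iic u) - ν.real (Iic w)| ≤
      ∑ i, |ν.real {v | v i ≤ u i} - ν.real {v | v i ≤ w i}| := by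
  have hmono : ∀ i, Monotone fun t : ℝ => ν.real {v : ι → ℝ | v i ≤ t} := fun i _ _ hst =>
    measureReal_mono fun v hv => le_trans hv hst
  have hspread := measureReal_Iic_sub_le_sum (ν := ν) (inf_le_sup (a := u) (b := w))
  have hterm : ∀ i, ν.real {v | v i ≤ (u ⊔ w) i} - ν.real {v | v i ≤ (u ⊓ w) i} =
      |ν.real {v | v i ≤ u i} - ν.real {v | v i ≤ w i}| := fun i => by
    simp only [Pi.sup_apply, Pi.inf_apply]
    rw [(hmono i).map_sup, (hmono i).map_inf, sup_sub_inf_eq_abs_sub, abs_sub_comm]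
  have hIic : ∀ {a b : ι → ℝ}, a ≤ b → ν.real (Iic a) ≤ ν.real (Iic b) := fun hab =>
    measureReal_mono (Iic_subset_Iic.2 hab)
  rw [Finset.sum_congr rfl fun i _ => hterm i] at hspread
  rw [abs_sub_le_iff]
  constructor <;>
  linarith [hIic (inf_le_left (a := u) (b := w)), hIic (inf_le_right (a := u) (b := w)),
    hIic (le_sup_left (a := u) (b := w)), hIic (le_sup_right (a := u) (b := w))]

lemma lipschitzOnWith_measureReal_Iic_of_uniform_margins
    (hmarg : ∀ i, ∀ t ∈ Icc (0 : ℝ) 1, ν.real {v | v i ≤ t} = t) :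
    LipschitzOnWith (Fintype.card ι) (fun u => ν.real (Iic u)) (univ.pi fun _ => Icc 0 1) := by
  refine LipschitzOnWith.of_dist_le_mul fun u hu w hw => ?_
  calc dist (ν.real (Iic u)) (ν.real (Iic w))
      ≤ ∑ i, |ν.real {v | v i ≤ u i} - ν.real {v | v i ≤ w i}| :=
        abs_measureReal_Iic_sub_le_sum u w
    _ = ∑ i, dist (u i) (w i) := by
        refine Finset.sum_congr rfl fun i _ => ?_
        rw [hmarg i _ (hu i trivial), hmarg i _ (hw i trivial), Real.dist_eq]
    _ ≤ ∑ _i : ι, dist u w := Finset.sum_le_sum fun i _ => dist_le_pi_dist u w i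
    _ = Fintype.card ι * dist u w := by simp

end BoxMeasure

lemma Ioo_subset_range_cdf (μ : Measure ℝ) [IsProbabilityMeasure μ]
    (hcont : Continuous (cdf μ)) :
    Ioo 0 1 ⊆ range (cdf μ) := fun _ ht =>
  mem_range_of_exists_le_of_exists_ge hcont
    ((tendsto_cdf_atBot μ).eventually (eventually_le_nhds ht.1)).exists
    ((tendsto_cdf_atTop μ).eventually (eventually_ge_nhds ht.2)).exists

lemma Ioo_subset_range_of_continuous_marginal {ι : Type*} (μ : Measure (ι → ℝ))
    [IsProbabilityMeasure μ] (i : ι) (hcont : Continuous fun t => μ.real {y | y i ≤ t}) :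
    Ioo 0 1 ⊆ range fun t => μ.real {y | y i ≤ t} := by
  have := Measure.isProbabilityMeasure_map (μ := μ) (measurable_pi_apply i).aemeasurable
  have hcdf : (fun t => μ.real {y | y i ≤ t}) = cdf (μ.map fun y => y i) :=
    funext fun t => by
      rw [cdf_eq_real, map_measureReal_apply (measurable_pi_apply i) measurableSet_Iic]
      rfl
  rw [hcdf] at hcont ⊢
  exact Ioo_subset_range_cdf _ hcont

theorem sklar_uniqueness_general
    (d : ℕ)
    (μ : Measure (Fin d → ℝ)) [IsProbabilityMeasure μ]
    (F : (Fin d → ℝ) → ℝ)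
    (Fi : Fin d → ℝ → ℝ)
    (hFi : ∀ i t, Fi i t = (μ {y | y i ≤ t}).toReal)
    (hcont : ∀ i, Continuous (Fi i))
    (ν ν' : Measure (Fin d → ℝ))
    [IsProbabilityMeasure ν] [IsProbabilityMeasure ν']
    (hmarg : ∀ i : Fin d, ∀ t ∈ Icc (0 : ℝ) 1, (ν {v | v i ≤ t}).toReal = t)
    (hmarg' : ∀ i : Fin d, ∀ t ∈ Icc (0 : ℝ) 1, (ν' {v | v i ≤ t}).toReal = t)
    (C C' : (Fin d → ℝ) → ℝ)
    (hC : ∀ u, C u = (ν {v | ∀ i, v i ≤ u i}).toReal)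
    (hC' : ∀ u, C' u = (ν' {v | ∀ i, v i ≤ u i}).toReal)
    (hcouple : ∀ x : Fin d → ℝ, F x = C (fun i => Fi i (x i)))
    (hcouple' : ∀ x : Fin d → ℝ, F x = C' (fun i => Fi i (x i))) :
    ∀ u : Fin d → ℝ, (∀ i, u i ∈ Icc (0 : ℝ) 1) → C u = C' u := by
  have hFi_eq : ∀ i, Fi i = fun t => μ.real {y | y i ≤ t} := fun i => funext (hFi i)
  have hagree : EqOn C C' (univ.pi fun _ => Ioo 0 1) := fun w hw => by
    choose x hx using fun i =>
      Ioo_subset_range_of_continuous_marginal μ i (hFi_eq i ▸ hcont i) (hw i trivial)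
    have hw_eq : w = fun i => Fi i (x i) := funext fun i => by rw [hFi_eq, hx]
    rw [hw_eq, ← hcouple, hcouple']
  have hC_eq : C = fun u => ν.real (Iic u) := funext hC
  have hC'_eq : C' = fun u => ν'.real (Iic u) := funext hC'
  intro u hu
  refine hagree.of_subset_closure ?_ ?_ (pi_mono fun _ _ => Ioo_subset_Icc_self) ?_
    (mem_univ_pi.2 hu)
  · exact hC_eq ▸ (lipschitzOnWith_measureReal_Iic_of_uniform_margins hmarg).continuousOn
  · exact hC'_eq ▸ (lipschitzOnWith_measureReal_Iic_of_uniform_margins hmarg').continuousOn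
  · rw [closure_pi_set, closure_Ioo zero_ne_one]

/-- Uniqueness part of Sklar's theorem for continuous margins: if two copulas `C`, `C'`
(CDFs of probability measures on `[0,1]^d` with uniform margins) both couple the joint
CDF `F` with its continuous margins `F₁, …, F_d`, then `C = C'` on `[0,1]^d`. -/
theorem sklar_uniqueness
    (d : ℕ) (hd : 1 ≤ d)
    (μ : Measure (Fin d → ℝ)) [IsProbabilityMeasure μ]
    (F : (Fin d → ℝ) → ℝ)
    (hF : ∀ x, F x = (μ {y | ∀ i, y i ≤ x i}).toReal)
    (Fi : Fin d → ℝ → ℝ)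
    (hFi : ∀ i t, Fi i t = (μ {y | y i ≤ t}).toReal)
    (hcont : ∀ i, Continuous (Fi i))
    (ν ν' : Measure (Fin d → ℝ))
    [IsProbabilityMeasure ν] [IsProbabilityMeasure ν']
    (hsupp : ν {v | ∀ i, v i ∈ Icc (0 : ℝ) 1} = 1)
    (hsupp' : ν' {v | ∀ i, v i ∈ Icc (0 : ℝ) 1} = 1)
    (hmarg : ∀ i : Fin d, ∀ t ∈ Icc (0 : ℝ) 1, (ν {v | v i ≤ t}).toReal = t)
    (hmarg' : ∀ i : Fin d, ∀ t ∈ Icc (0 : ℝ) 1, (ν' {v | v i ≤ t}).toReal = t)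
    (C C' : (Fin d → ℝ) → ℝ)
    (hC : ∀ u, C u = (ν {v | ∀ i, v i ≤ u i}).toReal)
    (hC' : ∀ u, C' u = (ν' {v | ∀ i, v i ≤ u i}).toReal)
    (hcouple : ∀ x : Fin d → ℝ, F x = C (fun i => Fi i (x i)))
    (hcouple' : ∀ x : Fin d → ℝ, F x = C' (fun i => Fi i (x i))) :
    ∀ u : Fin d → ℝ, (∀ i, u i ∈ Icc (0 : ℝ) 1) → C u = C' u :=
  sklar_uniqueness_general d μ F Fi hFi hcont ν ν' hmarg hmarg' C C' hC hC' hcouple hcouple'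
end

section
/- Let μ be a probability measure on (0,∞) (so μ({0}) = 0) with Laplace transform φ(x) = ∫₀^∞ e^{−xs} dμ(s); then φ : [0,∞) → (0,1] is continuous, strictly decreasing, φ(0) = 1, and φ(x) → 0 as x → ∞; let φ^{−1} : (0,1] → [0,∞) be its inverse. Let M have law μ and let E_1, …, E_d be i.i.d. Exp(1) random variables, with E_1, …, E_d, M mutually independent. Then for all u_1, …, u_d ∈ (0,1], P(φ(E_1/M) ≤ u_1, …, φ(E_d/M) ≤ u_d) = φ(φ^{−1}(u_1) + ⋯ + φ^{−1}(u_d)). (Correctness of the Marshall–Olkin sampling algorithm: the vector (φ(E_j/M))_j has the Archimedean copula with generator φ as its joint CDF.) -/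
/-!
Since `φ` is strictly decreasing on `[0, ∞)`, almost surely `φ(Eⱼ/M) ≤ uⱼ` iff
`tⱼ M ≤ Eⱼ` with `tⱼ = φ⁻¹(uⱼ)`. By independence the law of `(M, E)` is `μ ⊗ Exp(1)^d`, and
given `M = s` the events `tⱼ s ≤ Eⱼ` are independent of probability `e^{-tⱼ s}`, so the
probability is `∫ e^{-(Σ tⱼ) s} dμ(s) = φ(Σ tⱼ)`.
-/

open MeasureTheory Set ProbabilityTheory

lemma map_eq_expMeasure_one_of_tail {Ω : Type*} [MeasurableSpace Ω] {P : Measure Ω}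
    [IsProbabilityMeasure P] {X : Ω → ℝ} (hX : Measurable X)
    (h : ∀ t ≥ (0 : ℝ), P {ω | t < X ω} = ENNReal.ofReal (Real.exp (-t))) :
    P.map X = expMeasure 1 := by
  have : IsProbabilityMeasure (expMeasure 1) := isProbabilityMeasure_expMeasure one_pos
  have hIoi : ∀ t ≥ (0 : ℝ), (P.map X).real (Ioi t) = Real.exp (-t) := fun t ht => by
    rw [map_measureReal_apply hX measurableSet_Ioi, measureReal_def]
    simp [preimage, h t ht, (Real.exp_pos _).le]
  have := Measure.isProbabilityMeasure_map (μ := P) hX.aemeasurable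
  rw [← Measure.cdf_eq_iff]
  ext x
  rw [cdf_expMeasure_eq one_pos, cdf_eq_real, one_mul]
  split_ifs with hx
  · rw [← compl_Ioi, measureReal_compl measurableSet_Ioi, hIoi x hx, probReal_univ]
  · refine measureReal_mono_null (Iic_subset_Iic.2 (not_le.1 hx).le) ?_
    rw [← compl_Ioi, measureReal_compl measurableSet_Ioi, hIoi 0 le_rfl]
    simp

lemma expMeasure_Ici {r : ℝ} (hr : 0 < r) {a : ℝ} (ha : 0 ≤ a) :
    expMeasure r (Ici a) = ENNReal.ofReal (Real.exp (-(r * a))) := by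
  have : IsProbabilityMeasure (expMeasure r) := isProbabilityMeasure_expMeasure hr
  have : NullSingletonClass (expMeasure r) := by
    unfold expMeasure gammaMeasure; infer_instance
  have hexp : Real.exp (-(r * a)) ≤ 1 := Real.exp_le_one_iff.2 (neg_nonpos.2 (by positivity))
  rw [← measure_congr (Ioi_ae_eq_Ici (μ := expMeasure r) (a := a)), ← compl_Iic,
    prob_compl_eq_one_sub measurableSet_Iic, ← ofReal_cdf, cdf_expMeasure_eq hr, if_pos ha,
    ← ENNReal.ofReal_one,
    ← ENNReal.ofReal_sub _ (sub_nonneg.2 hexp)]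
  congr 1; ring

lemma map_prodMk_eq_prod_pi_of_iIndepFun_cons {Ω β : Type*} [MeasurableSpace Ω]
    [MeasurableSpace β] {P : Measure Ω} [IsProbabilityMeasure P] {d : ℕ} {M : Ω → β}
    {E : Fin d → Ω → β} (hM : Measurable M) (hE : ∀ j, Measurable (E j))
    (hind : iIndepFun (Fin.cons M E : Fin (d + 1) → Ω → β) P) :
    P.map (fun ω => (M ω, fun j => E j ω))
      = (P.map M).prod (Measure.pi fun j => P.map (E j)) := by
  have hmeas : ∀ i, Measurable ((Fin.cons M E : Fin (d + 1) → Ω → β) i) :=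
    Fin.cases hM hE
  have hpi := (iIndepFun_iff_map_fun_eq_pi_map fun i => (hmeas i).aemeasurable).1 hind
  have hsplit := measurePreserving_piFinSuccAbove
    (fun i => P.map ((Fin.cons M E : Fin (d + 1) → Ω → β) i)) 0
  rw [← hpi] at hsplit
  exact (Measure.map_map (MeasurableEquiv.measurable _)
    (measurable_pi_lambda _ hmeas)).symm.trans hsplit.map_eq

lemma measurableSet_setOf_forall_mul_le {ι : Type*} [Countable ι] (t : ι → ℝ) :
    MeasurableSet {p : ℝ × (ι → ℝ) | ∀ j, t j * p.1 ≤ p.2 j} := by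
  simp only [ofPred_forall]
  exact .iInter fun j => measurableSet_le (by fun_prop) (by fun_prop)

lemma prod_pi_setOf_mul_le {ι : Type*} [Fintype ι] (ν : Measure ℝ) [SFinite ν]
    (ρ : ι → Measure ℝ) [∀ j, SigmaFinite (ρ j)] (t : ι → ℝ) :
    (ν.prod (Measure.pi ρ)) {p | ∀ j, t j * p.1 ≤ p.2 j}
      = ∫⁻ s, ∏ j, ρ j (Ici (t j * s)) ∂ν := by
  rw [Measure.prod_apply (measurableSet_setOf_forall_mul_le t)]
  congr 1 with s
  rw [← Measure.pi_pi]
  congr 1 with y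
  simp [Pi.le_def]

lemma integrable_exp_neg_mul {μ : Measure ℝ} [IsFiniteMeasure μ] (hμ : ∀ᵐ s ∂μ, 0 ≤ s)
    {x : ℝ} (hx : 0 ≤ x) : Integrable (fun s => Real.exp (-(x * s))) μ := by
  refine (integrable_const 1).mono' (by fun_prop) ?_
  filter_upwards [hμ] with s hs
  rw [Real.norm_of_nonneg (Real.exp_pos _).le, Real.exp_le_one_iff, neg_nonpos]
  exact mul_nonneg hx hs

lemma antitoneOn_integral_exp_neg_mul {μ : Measure ℝ} [IsFiniteMeasure μ]
    (hμ : ∀ᵐ s ∂μ, 0 ≤ s) :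
    AntitoneOn (fun x => ∫ s, Real.exp (-(x * s)) ∂μ) (Ici 0) := by
  intro x hx y hy hxy
  refine integral_mono_ae (integrable_exp_neg_mul hμ hy) (integrable_exp_neg_mul hμ hx) ?_
  filter_upwards [hμ] with s hs
  exact Real.exp_le_exp.2 (neg_le_neg (mul_le_mul_of_nonneg_right hxy hs))

lemma prod_pi_expMeasure_setOf_mul_le {ι : Type*} [Fintype ι] {μ : Measure ℝ}
    [IsFiniteMeasure μ] (hμ : ∀ᵐ s ∂μ, 0 ≤ s) {t : ι → ℝ} (ht : ∀ j, 0 ≤ t j) :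
    (μ.prod (Measure.pi fun _ : ι => expMeasure 1)) {p | ∀ j, t j * p.1 ≤ p.2 j}
      = ENNReal.ofReal (∫ s, Real.exp (-((∑ j, t j) * s)) ∂μ) := by
  have : IsProbabilityMeasure (expMeasure 1) := isProbabilityMeasure_expMeasure one_pos
  have hc : 0 ≤ ∑ j, t j := Finset.sum_nonneg fun j _ => ht j
  rw [prod_pi_setOf_mul_le, ofReal_integral_eq_lintegral_ofReal (integrable_exp_neg_mul hμ hc)
    (.of_forall fun s => (Real.exp_pos _).le)]
  refine lintegral_congr_ae ?_
  filter_upwards [hμ] with s hs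
  simp only [expMeasure_Ici one_pos (mul_nonneg (ht _) hs), one_mul]
  rw [← ENNReal.ofReal_prod_of_nonneg fun j _ => (Real.exp_pos _).le, ← Real.exp_sum,
    Finset.sum_mul, Finset.sum_neg_distrib]

/-- Correctness of the Marshall–Olkin sampling algorithm: if `μ` is a probability
measure on `(0,∞)` with Laplace transform `φ` (a strictly decreasing bijection
`[0,∞) → (0,1]` with inverse `φ⁻¹`), `M ~ μ`, and `E₁, …, E_d` are i.i.d. `Exp(1)`
with `E₁, …, E_d, M` mutually independent, then the vector `(φ(Eⱼ/M))ⱼ` has joint CDF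
`φ(φ⁻¹(u₁) + ⋯ + φ⁻¹(u_d))`, the Archimedean copula with generator `φ`. -/
theorem marshall_olkin_sampling_archimedean
    (d : ℕ)
    (μ : Measure ℝ) [IsProbabilityMeasure μ]
    (hsupp : μ {s | s ≤ 0} = 0)
    (φ : ℝ → ℝ)
    (hφ : ∀ x, φ x = ∫ s, Real.exp (-(x * s)) ∂μ)
    (φinv : ℝ → ℝ)
    (hinv : ∀ u ∈ Ioc (0 : ℝ) 1, 0 ≤ φinv u ∧ φ (φinv u) = u)
    (hinv' : ∀ x ≥ (0 : ℝ), φinv (φ x) = x)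
    {Ω : Type*} [MeasurableSpace Ω] (P : Measure Ω) [IsProbabilityMeasure P]
    (M : Ω → ℝ) (hMmeas : Measurable M)
    (hM : P.map M = μ)
    (E : Fin d → Ω → ℝ) (hEmeas : ∀ j, Measurable (E j))
    (hE : ∀ j, ∀ t ≥ (0 : ℝ), P {ω | t < E j ω} = ENNReal.ofReal (Real.exp (-t)))
    (hindep : ProbabilityTheory.iIndepFun
      (Fin.cons M E : Fin (d + 1) → Ω → ℝ) P) :
    ∀ u : Fin d → ℝ, (∀ j, u j ∈ Ioc (0 : ℝ) 1) →
      P {ω | ∀ j, φ (E j ω / M ω) ≤ u j}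
        = ENNReal.ofReal (φ (∑ j, φinv (u j))) := by
  intro u hu
  set t := fun j => φinv (u j)
  have ht : ∀ j, 0 ≤ t j ∧ φ (t j) = u j := fun j => hinv (u j) (hu j)
  have hμpos : ∀ᵐ s ∂μ, 0 < s := ae_iff.2 (by simpa only [not_lt] using hsupp)
  have hμnonneg : ∀ᵐ s ∂μ, 0 ≤ s := hμpos.mono fun _ => le_of_lt
  have hφanti : StrictAntiOn φ (Ici 0) :=
    (funext hφ ▸ antitoneOn_integral_exp_neg_mul hμnonneg).strictAntiOn_of_injOn
      (LeftInvOn.injOn fun x hx => hinv' x hx)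
  have hlaw : ∀ j, P.map (E j) = expMeasure 1 :=
    fun j => map_eq_expMeasure_one_of_tail (hEmeas j) (hE j)
  have hMpos : ∀ᵐ ω ∂P, 0 < M ω := ae_of_ae_map hMmeas.aemeasurable (hM ▸ hμpos)
  have hEpos : ∀ᵐ ω ∂P, ∀ j, 0 < E j ω := ae_all_iff.2 fun j =>
    (ae_iff_measure_eq ((hEmeas j) measurableSet_Ioi).nullMeasurableSet).2
      (by simpa using hE j 0 le_rfl)
  have hevent : {ω | ∀ j, φ (E j ω / M ω) ≤ u j}
      =ᵐ[P] (fun ω => (M ω, fun j => E j ω)) ⁻¹' {p | ∀ j, t j * p.1 ≤ p.2 j} := by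
    filter_upwards [hMpos, hEpos] with ω hMω hEω
    refine propext (forall_congr' fun j => ?_)
    rw [← (ht j).2, hφanti.le_iff_ge (div_nonneg (hEω j).le hMω.le) (ht j).1,
      le_div_iff₀ hMω]
  rw [measure_congr hevent,
    ← Measure.map_apply (by fun_prop) (measurableSet_setOf_forall_mul_le t),
    map_prodMk_eq_prod_pi_of_iIndepFun_cons hMmeas hEmeas hindep, hM, funext hlaw,
    prod_pi_expMeasure_setOf_mul_le hμnonneg fun j => (ht j).1, hφ]
end

section
/- Let μ_0 be a probability measure on [0,∞) with Laplace transform φ_0, let J ≥ 1, and for each j ∈ {1, …, J} let ψ_j : [0,∞) → [0,∞) and let κ_j be a measurable family of probability measures on [0,∞) indexed by t ∈ [0,∞) such that ∫₀^∞ e^{−ys} dκ_j(t)(s) = e^{−t ψ_j(y)} for all t, y ≥ 0. Let ν be the probability measure on [0,∞)^J obtained by first sampling t from μ_0 and then sampling the J coordinates independently from κ_1(t), …, κ_J(t) (i.e., ν = μ_0.bind(t ↦ ⊗_j κ_j(t))). Then for all y_1, …, y_J ≥ 0, ∫ exp(−∑_{j=1}^J y_j s_j) dν(s) = φ_0(∑_{j=1}^J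 ψ_j(y_j)). (Multivariate Laplace transform of independent subordinator values evaluated at a common random time; the core identity of the Hering–Hofert–Mai–Scherer construction.) -/
open MeasureTheory Set

/-!
For `t ≥ 0` the coordinates under `⊗ⱼ κⱼ(t)` are independent, so the Laplace transform of
`⊗ⱼ κⱼ(t)` at `y` factorises as `∏ⱼ e^{-tψⱼ(yⱼ)} = e^{-t ∑ⱼ ψⱼ(yⱼ)}`; integrating this in
`t ~ μ₀` gives `φ₀(∑ⱼ ψⱼ(yⱼ))`. As the integrand is positive, the integral against the mixture is
computed through lower Lebesgue integrals, which commute with `bind` unconditionally.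
-/

section MeasurePi

variable {α ι : Type*} [Fintype ι] {β : ι → Type*} [MeasurableSpace α]
  [∀ i, MeasurableSpace (β i)] {κ : ∀ i, α → Measure (β i)}

theorem measurable_measure_pi [∀ i a, IsProbabilityMeasure (κ i a)]
    (hκ : ∀ i, Measurable (κ i)) :
    Measurable fun a => Measure.pi fun i => κ i a := by
  refine .measure_of_isPiSystem_of_isProbabilityMeasure generateFrom_pi.symm isPiSystem_pi ?_
  rintro _ ⟨S, hS, rfl⟩
  simp_rw [Measure.pi_pi]
  exact Finset.measurable_prod _ fun i _ => (Measure.measurable_coe (hS i (mem_univ i))).comp (hκ i)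

theorem aemeasurable_measure_pi [∀ i, Nonempty (β i)] {μ : Measure α} {s : Set α}
    (hs : MeasurableSet s) (hμs : ∀ᵐ a ∂μ, a ∈ s) (hκ : ∀ i, Measurable (κ i))
    (hprob : ∀ i, ∀ a ∈ s, IsProbabilityMeasure (κ i a)) :
    AEMeasurable (fun a => Measure.pi fun i => κ i a) μ := by
  classical
  let κ' i := s.piecewise (κ i) fun _ => Measure.dirac (Classical.arbitrary (β i))
  have : ∀ i a, IsProbabilityMeasure (κ' i a) := by
    intro i a
    by_cases ha : a ∈ s
    · simpa [κ', ha] using hprob i a ha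
    · simp only [κ', piecewise_eq_of_notMem _ _ _ ha]
      infer_instance
  refine (measurable_measure_pi (κ := κ') fun i =>
    (hκ i).piecewise hs measurable_const).aemeasurable.congr ?_
  filter_upwards [hμs] with a ha
  simp [κ', ha]

end MeasurePi

theorem integral_exp_neg_sum_mul_pi {ι : Type*} [Fintype ι] (μ : ι → Measure ℝ)
    [∀ i, SigmaFinite (μ i)] (y : ι → ℝ) :
    ∫ s, Real.exp (-∑ i, y i * s i) ∂Measure.pi μ = ∏ i, ∫ x, Real.exp (-(y i * x)) ∂μ i := by
  simp_rw [← Finset.sum_neg_distrib, Real.exp_sum]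
  exact integral_fintype_prod_eq_prod (fun i x => Real.exp (-(y i * x))) (μ := μ)

theorem integral_bind_of_nonneg {α β : Type*} [MeasurableSpace α] [MeasurableSpace β]
    {μ : Measure α} {m : α → Measure β} (hm : AEMeasurable m μ) {f : β → ℝ} (hf : Measurable f)
    (hf0 : 0 ≤ f) (hfm : ∀ᵐ a ∂μ, Integrable f (m a)) :
    ∫ x, f x ∂μ.bind m = ∫ a, ∫ x, f x ∂m a ∂μ := by
  have hlint : (fun a => ∫ x, f x ∂m a) = fun a => (∫⁻ x, ENNReal.ofReal (f x) ∂m a).toReal :=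
    funext fun a => integral_eq_lintegral_of_nonneg_ae (ae_of_all _ hf0) hf.aestronglyMeasurable
  have hmeas : AEStronglyMeasurable (fun a => ∫ x, f x ∂m a) μ := by
    rw [hlint]
    exact ((Measure.measurable_lintegral hf.ennreal_ofReal).comp_aemeasurable
      hm).ennreal_toReal.aestronglyMeasurable
  rw [integral_eq_lintegral_of_nonneg_ae (ae_of_all _ hf0) hf.aestronglyMeasurable,
    Measure.lintegral_bind hm hf.ennreal_ofReal.aemeasurable,
    integral_eq_lintegral_of_nonneg_ae (ae_of_all _ fun a => integral_nonneg hf0) hmeas]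
  congr 1
  refine lintegral_congr_ae ?_
  filter_upwards [hfm] with a ha
  rw [ofReal_integral_eq_lintegral_ofReal ha (ae_of_all _ hf0)]

theorem subordinator_mixture_laplace_transform_general
    (μ₀ : Measure ℝ)
    (hsupp : μ₀ {t | t < 0} = 0)
    (φ₀ : ℝ → ℝ)
    (hφ₀ : ∀ x, φ₀ x = ∫ t, Real.exp (-(x * t)) ∂μ₀)
    (J : ℕ)
    (ψ : Fin J → ℝ → ℝ)
    (κ : Fin J → ℝ → Measure ℝ)
    (hκmeas : ∀ j, Measurable (κ j))
    (hκprob : ∀ j, ∀ t ≥ (0 : ℝ), IsProbabilityMeasure (κ j t))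
    (hκlt : ∀ j, ∀ t ≥ (0 : ℝ), ∀ y ≥ (0 : ℝ),
      ∫ s, Real.exp (-(y * s)) ∂(κ j t) = Real.exp (-(t * ψ j y)))
    (ν : Measure (Fin J → ℝ))
    (hν : ν = μ₀.bind (fun t => Measure.pi (fun j => κ j t))) :
    ∀ y : Fin J → ℝ, (∀ j, 0 ≤ y j) →
      ∫ s, Real.exp (-(∑ j, y j * s j)) ∂ν = φ₀ (∑ j, ψ j (y j)) := by
  intro y hy
  have hμ₀ : ∀ᵐ t ∂μ₀, t ∈ Ici (0 : ℝ) := by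
    simpa [ae_iff] using hsupp
  have hinner : ∀ t ∈ Ici (0 : ℝ), ∫ s, Real.exp (-∑ j, y j * s j) ∂Measure.pi (κ · t) =
      Real.exp (-((∑ j, ψ j (y j)) * t)) := by
    intro t ht
    have := fun j => hκprob j t ht
    rw [integral_exp_neg_sum_mul_pi, Finset.prod_congr rfl fun j _ => hκlt j t ht (y j) (hy j),
      ← Real.exp_sum, Finset.sum_neg_distrib, ← Finset.mul_sum, mul_comm]
  rw [hν, hφ₀, integral_bind_of_nonneg
    (aemeasurable_measure_pi measurableSet_Ici hμ₀ hκmeas hκprob) (by fun_prop)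
    (fun s => (Real.exp_pos _).le)]
  · exact integral_congr_ae (hμ₀.mono hinner)
  · -- integrability for free: a non-integrable function would have integral `0`
    filter_upwards [hμ₀] with t ht
    exact .of_integral_ne_zero (by rw [hinner t ht]; positivity)

/-- Multivariate Laplace transform of independent subordinator values at a common random
time (core identity of the Hering–Hofert–Mai–Scherer construction): if `ν` is obtained by
sampling `t ~ μ₀` and then sampling the `J` coordinates independently from `κⱼ(t)`, where
`κⱼ(t)` has Laplace transform `e^{-tψⱼ(y)}`, then
`∫ e^{-∑ⱼ yⱼ sⱼ} dν(s) = φ₀(∑ⱼ ψⱼ(yⱼ))`. -/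
theorem subordinator_mixture_laplace_transform
    (μ₀ : Measure ℝ) [IsProbabilityMeasure μ₀]
    (hsupp : μ₀ {t | t < 0} = 0)
    (φ₀ : ℝ → ℝ)
    (hφ₀ : ∀ x, φ₀ x = ∫ t, Real.exp (-(x * t)) ∂μ₀)
    (J : ℕ) (hJ : 1 ≤ J)
    (ψ : Fin J → ℝ → ℝ)
    (hψ : ∀ j, ∀ y ≥ (0 : ℝ), 0 ≤ ψ j y)
    (κ : Fin J → ℝ → Measure ℝ)
    (hκmeas : ∀ j, Measurable (κ j))
    (hκprob : ∀ j, ∀ t ≥ (0 : ℝ), IsProbabilityMeasure (κ j t))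
    (hκsupp : ∀ j, ∀ t ≥ (0 : ℝ), κ j t {s | s < 0} = 0)
    (hκlt : ∀ j, ∀ t ≥ (0 : ℝ), ∀ y ≥ (0 : ℝ),
      ∫ s, Real.exp (-(y * s)) ∂(κ j t) = Real.exp (-(t * ψ j y)))
    (ν : Measure (Fin J → ℝ))
    (hν : ν = μ₀.bind (fun t => Measure.pi (fun j => κ j t))) :
    ∀ y : Fin J → ℝ, (∀ j, 0 ≤ y j) →
      ∫ s, Real.exp (-(∑ j, y j * s j)) ∂ν = φ₀ (∑ j, ψ j (y j)) :=
  subordinator_mixture_laplace_transform_general μ₀ hsupp φ₀ hφ₀ J ψ κ hκmeas hκprob hκlt ν hν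
end
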